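/- Define F : ℝ⁶ → ℝ by F(a,b,c,d,e,f) = (4/3)a² + 2b² + (10/3)c² + 6d² + (10/3)e² + (4/3)f² + 2ab + (10/3)ac + 4ad + (8/3)ae + (4/3)af + 4bc + 6bd + 4be + 2bf + 8cd + (16/3)ce + (8/3)cf + 8de + 4df + (10/3)ef − 4a − 6b − 6c − 10d − 6e − 4f + 6. Then F(a,b,c,d,e,f) ≥ 1 for all a,b,c,d,e,f ≥ 0, with equality at (a,b,c,d,e,f) = (1/2, 1, 0, 0, 0, 1/2). -/
import Mathlib

/-- The quadratic polynomial arising in the lambda-norm computation for the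
trivial K(ℝ)-type of E₆(−14). -/
noncomputable def Fpoly (a b c d e f : ℝ) : ℝ :=
  (4/3) * a^2 + 2 * b^2 + (10/3) * c^2 + 6 * d^2 + (10/3) * e^2 + (4/3) * f^2 +
  2 * a * b + (10/3) * a * c + 4 * a * d + (8/3) * a * e + (4/3) * a * f +
  4 * b * c + 6 * b * d + 4 * b * e + 2 * b * f +
  8 * c * d + (16/3) * c * e + (8/3) * c * f +
  8 * d * e + 4 * d * f + (10/3) * e * f -
  4 * a - 6 * b - 6 * c - 10 * d - 6 * e - 4 * f + 6

/-- F ≥ 1 on the nonnegative orthant, with equality at (½,1,0,0,0,½). -/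
theorem Fpoly_ge_one :
    (∀ a b c d e f : ℝ, 0 ≤ a → 0 ≤ b → 0 ≤ c → 0 ≤ d → 0 ≤ e → 0 ≤ f →
      1 ≤ Fpoly a b c d e f) ∧
    Fpoly (1/2) 1 0 0 0 (1/2) = 1 := by
  constructor
  · intro a b c d e f ha hb hc hd he hf
    unfold Fpoly
    nlinarith [sq_nonneg ((a-1/2) + (3/4)*(b-1) + (5/4)*c + (3/2)*d + e + (1/2)*(f-1/2)),
      sq_nonneg ((b-1) + (3/5)*c + (6/5)*d + (4/5)*e + (2/5)*(f-1/2)),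
      sq_nonneg (c + (3/4)*d + (1/2)*e + (1/4)*(f-1/2)),
      sq_nonneg (d + (2/3)*e + (1/3)*(f-1/2)),
      sq_nonneg (e + (1/2)*(f-1/2)),
      sq_nonneg (f-1/2), hc, he]
  · unfold Fpoly; norm_num
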